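/- The topological group G, with the subspace topology inherited from lim← G_n, admits no complete metric compatible with its topology; that is, G is not completely metrizable. -/

import Mathlib

/-!
Setting: `H 1, H 2, …` is a sequence of nontrivial groups (`H 0` is an unused dummy
factor).  `Gₙ = H 1 ∗ ⋯ ∗ H n` is realized canonically as the set of elements of the big
free product `Monoid.CoprodI H` whose reduced word only uses letters of type `i` with
`1 ≤ i ≤ n` (in particular `G₀` is trivial).  `ψ n : G (n+1) → G n` is realized as the
homomorphism of the big free product which is the identity on each `H i` with `i ≤ n`
and kills all the other factors.  The inverse limit `lim← Gₙ` is the set of sequences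
`f` with `f n ∈ Gₙ` and `ψ n (f (n+1)) = f n`; since each `Gₙ` is discrete it carries the
topology inherited from the product of discrete topologies (we give the big free product
the discrete topology `⊥`).
-/

noncomputable section

/-- The reduced word of an element of the free product, as a list of letters. -/
noncomputable def redWord {H : ℕ → Type*} [∀ i, Group (H i)] (g : Monoid.CoprodI H) :
    List (Σ i, H i) :=
  letI : ∀ i, DecidableEq (H i) := fun _ => Classical.decEq _
  (Monoid.CoprodI.Word.equiv g).toList

/-- `kappa m g` : the (possibly unreduced) word obtained by deleting from the reduced
word of `g` all letters of type `i` with `i ≥ m + 1`. -/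
noncomputable def kappa {H : ℕ → Type*} [∀ i, Group (H i)] (m : ℕ) (g : Monoid.CoprodI H) :
    List (Σ i, H i) :=
  (redWord g).filter (fun l => decide (l.1 ≤ m))

/-- `ψ n`, extended to the whole free product: the homomorphism which is the identity on
each factor `H i` with `i ≤ n` and kills all factors `H i` with `i > n`. -/
noncomputable def psi {H : ℕ → Type*} [∀ i, Group (H i)] (n : ℕ) :
    Monoid.CoprodI H →* Monoid.CoprodI H :=
  Monoid.CoprodI.lift (fun i => if i ≤ n then (Monoid.CoprodI.of : H i →* Monoid.CoprodI H) else 1)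

/-- Each group `Gₙ` (and hence the big free product) is given the discrete topology. -/
instance (H : ℕ → Type*) [∀ i, Group (H i)] : TopologicalSpace (Monoid.CoprodI H) := ⊥

/-- The inverse limit `lim← Gₙ`:  sequences `(w₀, w₁, w₂, …)` with `wₙ ∈ Gₙ`
(i.e. the reduced word of `wₙ` uses only letters of type `i` with `1 ≤ i ≤ n`; the `n = 0`
term is the trivial dummy extension of the inverse system) satisfying `ψ n (w (n+1)) = w n`.
As a subset of the product `Π n, CoprodI H` of discrete spaces it carries the product
(subspace) topology. -/
def invLim (H : ℕ → Type*) [∀ i, Group (H i)] : Set (ℕ → Monoid.CoprodI H) :=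
  {f | (∀ n, ∀ l ∈ redWord (f n), 1 ≤ l.1 ∧ l.1 ≤ n) ∧ ∀ n, psi n (f (n + 1)) = f n}

/-- The fiber `σ⁻¹(N)`:  those `(wₙ) ∈ lim← Gₙ` such that `κ₁(wₙ) = κ₁(w_N)` for all
`n ≥ N`, and either `N = 1` or `κ₁(w_{N-1}) ≠ κ₁(w_N)`. -/
def sigmaFiber (H : ℕ → Type*) [∀ i, Group (H i)] (N : ℕ) : Set (invLim H) :=
  {f | (∀ n, N ≤ n → kappa 1 (f.1 n) = kappa 1 (f.1 N)) ∧
    (N = 1 ∨ kappa 1 (f.1 (N - 1)) ≠ kappa 1 (f.1 N))}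


/-- The subgroup `G ⊆ lim← Gₙ` of sequences `(wₙ)` such that for each `m ≥ 1` the
sequence of words `κ_m(w₁), κ_m(w₂), …` is eventually constant.  It carries the subspace
topology from `lim← Gₙ`. -/
def bigG (H : ℕ → Type*) [∀ i, Group (H i)] : Set (invLim H) :=
  {f | ∀ m, 1 ≤ m → ∃ N, ∀ n, N ≤ n → kappa m (f.1 n) = kappa m (f.1 N)}

/-! A complete metric would make `G` a Baire space. `G` is the countable union of the closed
sets on which `κ₁(wₙ)` is constant from `n = N` on, so one of them contains a basic
neighbourhood `{y | yₙ = xₙ for n ≤ k}` of some `x`. Replacing all terms of `x` after a large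
level `M` by `x_M [a, b]`, with `a ∈ H_{M+1}` and `b ∈ H₁` (so that `ψ_M` kills `[a, b]`), gives a
point of that neighbourhood whose `κ₁` still changes at level `M + 1`. -/

open Monoid.CoprodI Topology
open scoped commutatorElement

section ReducedWord

variable {H : ℕ → Type*} [∀ i, Group (H i)]

lemma redWord_prod (w : Word H) : redWord w.prod = w.toList := by
  -- the decidability instance that `redWord` is defined with, not the one `classical` would give
  let _ : ∀ i, DecidableEq (H i) := fun _ => Classical.decEq _
  exact congrArg Word.toList (Word.equiv.apply_symm_apply w)

lemma prod_redWord (g : Monoid.CoprodI H) : ((redWord g).map fun l => of l.2).prod = g := by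
  let _ : ∀ i, DecidableEq (H i) := fun _ => Classical.decEq _
  exact Word.equiv.symm_apply_apply g

lemma redWord_one : redWord (1 : Monoid.CoprodI H) = [] := by
  simpa using redWord_prod (H := H) Word.empty

lemma redWord_mul_prod_of_reduced (g : Monoid.CoprodI H) (L : List (Σ i, H i))
    (hL : ∀ l ∈ L, l.2 ≠ 1) (hchain : L.IsChain fun a b => a.1 ≠ b.1)
    (hjoin : ∀ p ∈ (redWord g).getLast?, ∀ q ∈ L.head?, p.1 ≠ q.1) :
    redWord (g * (L.map fun l => of l.2).prod) = redWord g ++ L := by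
  let _ : ∀ i, DecidableEq (H i) := fun _ => Classical.decEq _
  let W : Word H :=
    { toList := redWord g ++ L
      ne_one := by
        simp only [List.mem_append]
        rintro l (hl | hl)
        exacts [(Word.equiv g).ne_one l hl, hL l hl]
      chain_ne := List.isChain_append.mpr ⟨(Word.equiv g).chain_ne, hchain, hjoin⟩ }
  have hW : W.prod = g * (L.map fun l => of l.2).prod := by
    change ((redWord g ++ L).map fun l => of l.2).prod = _
    rw [List.map_append, List.prod_append, prod_redWord]
  rw [← hW, redWord_prod]

lemma psi_of {n i : ℕ} (y : H i) : psi n (of y) = if i ≤ n then of y else 1 := by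
  rw [psi, lift_of]
  split_ifs <;> rfl

lemma psi_eq_self {n : ℕ} {g : Monoid.CoprodI H} (hg : ∀ l ∈ redWord g, l.1 ≤ n) :
    psi n g = g := by
  conv_lhs => rw [← prod_redWord g]
  rw [map_list_prod, List.map_map]
  conv_rhs => rw [← prod_redWord g]
  refine congrArg List.prod (List.map_congr_left fun l hl => ?_)
  simp only [Function.comp_apply, psi_of, if_pos (hg l hl)]

variable {M i j : ℕ} {g : Monoid.CoprodI H} {a : H i} {b : H j}

lemma redWord_mul_commutatorElement_of (hg : ∀ l ∈ redWord g, l.1 ≤ M) (hi : M < i)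
    (hij : i ≠ j) (ha : a ≠ 1) (hb : b ≠ 1) :
    redWord (g * ⁅of a, of b⁆) = redWord g ++ [⟨i, a⟩, ⟨j, b⟩, ⟨i, a⁻¹⟩, ⟨j, b⁻¹⟩] := by
  rw [← redWord_mul_prod_of_reduced]
  · simp [commutatorElement_def, mul_assoc]
  · simp [ha, hb]
  · simp [hij, hij.symm]
  · intro p hp q hq
    obtain rfl : q = ⟨i, a⟩ := by simpa using hq.symm
    exact ((hg p (List.mem_of_mem_getLast? hp)).trans_lt hi).ne

lemma psi_mul_commutatorElement_of (hg : ∀ l ∈ redWord g, l.1 ≤ M) (hi : M < i) (hj : j ≤ M) :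
    psi M (g * ⁅of a, of b⁆) = g := by
  simp [commutatorElement_def, psi_of, hj, not_le.mpr hi, psi_eq_self hg]

end ReducedWord

section InverseLimit

variable {H : ℕ → Type*} [∀ i, Group (H i)]

lemma ite_mem_invLim {f : ℕ → Monoid.CoprodI H} (hf : f ∈ invLim H) {M : ℕ}
    {w : Monoid.CoprodI H} (hw : ∀ l ∈ redWord w, 1 ≤ l.1 ∧ l.1 ≤ M + 1) (hψ : psi M w = f M) :
    (fun n => if n ≤ M then f n else w) ∈ invLim H := by
  refine ⟨fun n l hl => ?_, fun n => ?_⟩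
  · beta_reduce at hl
    split_ifs at hl with hn
    · exact hf.1 n l hl
    · exact (hw l hl).imp_right (·.trans (by omega))
  · rcases lt_trichotomy n M with hn | rfl | hn
    · simp only [if_pos (Nat.succ_le_of_lt hn), if_pos hn.le]
      exact hf.2 n
    · simp [hψ]
    · simp only [if_neg (by omega : ¬ n + 1 ≤ M), if_neg hn.not_ge]
      exact psi_eq_self fun l hl => (hw l hl).2.trans (by omega)

lemma mem_bigG_of_eventually_const {f : invLim H} {M : ℕ} (hf : ∀ n, M ≤ n → f.1 n = f.1 M) :
    f ∈ bigG H :=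
  fun _ _ => ⟨M, fun n hn => by rw [hf n hn]⟩

lemma one_mem_invLim : (fun _ => 1 : ℕ → Monoid.CoprodI H) ∈ invLim H :=
  ⟨fun _ _ hl => by simp [redWord_one] at hl, fun _ => map_one _⟩

instance : Nonempty (bigG H) :=
  ⟨⟨⟨_, one_mem_invLim⟩, mem_bigG_of_eventually_const (M := 0) fun _ _ => rfl⟩⟩

lemma exists_mem_bigG_kappa_one_ne [Nontrivial (H 1)] (f : invLim H) {M : ℕ} (hM : 1 ≤ M)
    [Nontrivial (H (M + 1))] :
    ∃ g ∈ bigG H, (∀ n ≤ M, g.1 n = f.1 n) ∧ kappa 1 (g.1 (M + 1)) ≠ kappa 1 (f.1 M) := by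
  obtain ⟨a, ha⟩ := exists_ne (1 : H (M + 1))
  obtain ⟨b, hb⟩ := exists_ne (1 : H 1)
  have hfM : ∀ l ∈ redWord (f.1 M), 1 ≤ l.1 ∧ l.1 ≤ M := f.2.1 M
  have hred := redWord_mul_commutatorElement_of (fun l hl => (hfM l hl).2) M.lt_add_one
    (by omega : M + 1 ≠ 1) ha hb
  have hg := ite_mem_invLim f.2 (w := f.1 M * ⁅of a, of b⁆) (M := M)
    (fun l hl => by
      rw [hred, List.mem_append] at hl
      rcases hl with hl | hl
      · exact (hfM l hl).imp_right (·.trans M.le_succ)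
      · simp only [List.mem_cons, List.not_mem_nil, or_false] at hl
        rcases hl with rfl | rfl | rfl | rfl <;> simp)
    (psi_mul_commutatorElement_of (fun l hl => (hfM l hl).2) M.lt_add_one hM)
  refine ⟨⟨_, hg⟩, mem_bigG_of_eventually_const (M := M + 1) fun n hn => ?_,
    fun n hn => if_pos hn, ?_⟩
  · simp only [if_neg (by omega : ¬ n ≤ M), if_neg (by omega : ¬ M + 1 ≤ M)]
  · have hlen : (kappa 1 (f.1 M * ⁅of a, of b⁆)).length = (kappa 1 (f.1 M)).length + 2 := by
      simp [kappa, hred, Nat.one_le_iff_ne_zero.mp hM]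
    intro h
    simp only [if_neg (by omega : ¬ M + 1 ≤ M)] at h
    simp [h] at hlen

end InverseLimit

lemma exists_cylinder_subset_of_mem_nhds {X Y : Type*} [TopologicalSpace X] [DiscreteTopology X]
    [TopologicalSpace Y] {p : Y → ℕ → X} (hp : IsInducing p) {U : Set Y} {y : Y} (hU : U ∈ 𝓝 y) :
    ∃ k, ∀ z, p z ∈ PiNat.cylinder (p y) k → z ∈ U := by
  obtain ⟨s, hs, hsU⟩ := Filter.mem_comap.mp (hp.nhds_eq_comap y ▸ hU)
  obtain ⟨_, ⟨x, k, rfl⟩, hyx, hxs⟩ :=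
    (PiNat.isTopologicalBasis_cylinders fun _ => X).mem_nhds_iff.mp hs
  rw [PiNat.mem_cylinder_iff_eq] at hyx
  exact ⟨k, fun z hz => hsU (hxs (hyx ▸ hz))⟩

section Topology

variable (H : ℕ → Type*) [∀ i, Group (H i)]

instance : DiscreteTopology (Monoid.CoprodI H) := ⟨rfl⟩

lemma isInducing_bigG_val_val : IsInducing fun x : bigG H => x.1.1 :=
  IsInducing.subtypeVal.comp IsInducing.subtypeVal

def kappaOneStableFrom (N : ℕ) : Set (bigG H) :=
  {x | ∀ n, N ≤ n → kappa 1 (x.1.1 n) = kappa 1 (x.1.1 N)}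

lemma isClosed_kappaOneStableFrom (N : ℕ) : IsClosed (kappaOneStableFrom H N) := by
  simp only [kappaOneStableFrom, Set.ofPred_forall]
  refine isClosed_iInter fun n => isClosed_iInter fun _ => ?_
  exact (isClosed_discrete {p : Monoid.CoprodI H × Monoid.CoprodI H |
    kappa 1 p.1 = kappa 1 p.2}).preimage
    (((continuous_apply n).prodMk (continuous_apply N)).comp (isInducing_bigG_val_val H).continuous)

lemma iUnion_kappaOneStableFrom : ⋃ N, kappaOneStableFrom H N = Set.univ :=
  Set.eq_univ_of_forall fun x => Set.mem_iUnion.mpr (x.2 1 le_rfl)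

end Topology

/-- The topological group `G`, with the subspace topology inherited
from `lim← Gₙ`, admits no complete metric compatible with its topology:  `G` is not
completely metrizable. -/
theorem bigG_not_completely_metrizable (H : ℕ → Type*) [∀ i, Group (H i)]
    (hH : ∀ i, 1 ≤ i → Nontrivial (H i)) :
    ¬ ∃ m : MetricSpace (bigG H),
        m.toUniformSpace.toTopologicalSpace = instTopologicalSpaceSubtype ∧
        @CompleteSpace (bigG H) m.toUniformSpace := by
  rintro ⟨m, hTop, hComp⟩
  have : TopologicalSpace.IsCompletelyPseudoMetrizableSpace (bigG H) :=
    ⟨⟨m.toPseudoMetricSpace, hTop, hComp⟩⟩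
  obtain ⟨N, x, hx⟩ := nonempty_interior_of_iUnion_of_closed
    (isClosed_kappaOneStableFrom H) (iUnion_kappaOneStableFrom H)
  obtain ⟨k, hk⟩ := exists_cylinder_subset_of_mem_nhds (isInducing_bigG_val_val H)
    (mem_interior_iff_mem_nhds.mp hx)
  set M := max k N + 1
  have := hH 1 le_rfl
  have := hH (M + 1) (by omega)
  obtain ⟨y, hy, hyx, hκ⟩ := exists_mem_bigG_kappa_one_ne x.1 (M := M) (by omega)
  have hyN : ⟨y, hy⟩ ∈ kappaOneStableFrom H N := hk _ fun n hn => hyx n (by omega)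
  have hxN : x ∈ kappaOneStableFrom H N := interior_subset hx
  exact hκ (by rw [hyN (M + 1) (by omega), hyx N (by omega), hxN M (by omega)])
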